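/- arXiv:2310.09804 — 2 statements merged into one kernel-verified Lean document; each statement's English description precedes it below -/
import Mathlib

section
/- (Descent Lemma for Byz-DASHA-PAGE.) Let x^t, g_i^t, h_i^t (i ∈ 𝒢) and g^t be random vectors with x^{t+1} = x^t − γ g^t, γ > 0, and suppose g^t satisfies the robust-aggregation bound E‖g^t − ḡ^t‖² ≤ cδ·(1/(G(G−1))) Σ_{i,l∈𝒢, i≠l} E‖g_i^t − g_l^t‖², where ḡ^t = (1/G) Σ_{i∈𝒢} g_i^t and h^t = (1/G) Σ_{i∈𝒢} h_i^t. Then for every s > 0, with κ = 1 − 8Bcδ(1+s): E[f(x^{t+1})] ≤ E[f(x^t)] − (γκ/2)·E‖∇f(x^t)‖² − (1/(2γ) − L/2)·E‖x^{t+1} − x^t‖² + 8γcδ(1+s)·(1/G) Σ_{i∈𝒢} E‖g_i^t − h_i^t‖² + 8γcδ(1+s)·(1/G) Σ_{i∈𝒢} E‖h_i^t − ∇f_i(x^t)‖² + γ(1 + s^{−1})·E‖ḡ^t − h^t‖² + γ(1 + s^{−1})·E‖h^t − ∇f(x^t)‖² + 4γcδ(1+s)ζ². -/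
open MeasureTheory Finset

/-!
L-smoothness gives the quadratic upper bound `f x⁺ ≤ f x + ⟪∇f x, x⁺ - x⟫ + L/2 ‖x⁺ - x‖²`, and for
`x⁺ - x = -γ gᵗ` polarisation turns the linear term into `-γ/2 (‖∇f‖² + ‖gᵗ‖² - ‖gᵗ - ∇f‖²)`.
Young's inequality splits `‖gᵗ - ∇f‖²` along `gᵗ → ḡᵗ → hᵗ → ∇f` with weights `1 + s` and
`2 (1 + s⁻¹)`. The aggregation error is bounded through the pairwise distances: `gᵢ - gₗ` splits
into `(gᵢ - hᵢ) + (hᵢ - ∇fᵢ) + (∇fᵢ - ∇f)` minus the same for `l`, every index lies in `2 (G - 1)`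
ordered pairs, and heterogeneity bounds the last group by `B ‖∇f‖² + ζ²`. That `B`-part is what
lowers the coefficient of `E ‖∇f‖²` from `γ/2` to `γκ/2`.
-/

section Young

variable {E : Type*} [SeminormedAddCommGroup E]

theorem norm_add_sq_le_of_pos (a b : E) {s : ℝ} (hs : 0 < s) :
    ‖a + b‖ ^ 2 ≤ (1 + s) * ‖a‖ ^ 2 + (1 + s⁻¹) * ‖b‖ ^ 2 :=
  calc ‖a + b‖ ^ 2 ≤ (‖a‖ + ‖b‖) ^ 2 := by gcongr; exact norm_add_le a b
    _ = (1 + s) * ‖a‖ ^ 2 + (1 + s⁻¹) * ‖b‖ ^ 2 - s⁻¹ * (s * ‖a‖ - ‖b‖) ^ 2 := by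
      field_simp; ring
    _ ≤ (1 + s) * ‖a‖ ^ 2 + (1 + s⁻¹) * ‖b‖ ^ 2 := by
      have : 0 ≤ s⁻¹ * (s * ‖a‖ - ‖b‖) ^ 2 := by positivity
      linarith

theorem norm_add_sq_le_two_mul (a b : E) : ‖a + b‖ ^ 2 ≤ 2 * ‖a‖ ^ 2 + 2 * ‖b‖ ^ 2 := by
  simpa [one_add_one_eq_two] using norm_add_sq_le_of_pos a b one_pos

theorem norm_sub_sq_le_two_mul (a b : E) : ‖a - b‖ ^ 2 ≤ 2 * ‖a‖ ^ 2 + 2 * ‖b‖ ^ 2 := by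
  simpa [sub_eq_add_neg] using norm_add_sq_le_two_mul a (-b)

theorem norm_sub_sq_le_three_of_pos (a b c d : E) {s : ℝ} (hs : 0 < s) :
    ‖a - d‖ ^ 2
      ≤ (1 + s) * ‖a - b‖ ^ 2 + 2 * (1 + s⁻¹) * ‖b - c‖ ^ 2 + 2 * (1 + s⁻¹) * ‖c - d‖ ^ 2 := by
  have hbd := norm_add_sq_le_of_pos (a - b) (b - d) hs
  have hcd := norm_add_sq_le_two_mul (b - c) (c - d)
  rw [sub_add_sub_cancel] at hbd hcd
  linear_combination hbd + (1 + s⁻¹) * hcd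

theorem norm_sub_sq_le_split (g g' h h' p p' P : E) :
    ‖g - g'‖ ^ 2 ≤ (8 * ‖g - h‖ ^ 2 + 8 * ‖h - p‖ ^ 2 + 4 * ‖p - P‖ ^ 2)
      + (8 * ‖g' - h'‖ ^ 2 + 8 * ‖h' - p'‖ ^ 2 + 4 * ‖p' - P‖ ^ 2) := by
  have hsplit : ∀ g h p : E, ‖g - P‖ ^ 2 ≤ 4 * ‖g - h‖ ^ 2 + 4 * ‖h - p‖ ^ 2 + 2 * ‖p - P‖ ^ 2 := by
    intro g h p
    have h₁ := norm_add_sq_le_two_mul (g - p) (p - P)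
    have h₂ := norm_add_sq_le_two_mul (g - h) (h - p)
    rw [sub_add_sub_cancel] at h₁ h₂
    linear_combination h₁ + 2 * h₂
  have h₀ := norm_sub_sq_le_two_mul (g - P) (g' - P)
  rw [sub_sub_sub_cancel_right] at h₀
  linear_combination h₀ + 2 * hsplit g h p + 2 * hsplit g' h' p'

end Young

theorem Finset.sum_offDiag_add {ι R : Type*} [Fintype ι] [DecidableEq ι] [CommRing R]
    (ψ : ι → R) :
    ∑ q ∈ (univ : Finset ι).offDiag, (ψ q.1 + ψ q.2) = 2 * (Fintype.card ι - 1) * ∑ i, ψ i := by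
  have hsplit := Finset.sum_union (Finset.disjoint_diag_offDiag (univ : Finset ι))
    (f := fun q => ψ q.1 + ψ q.2)
  rw [Finset.diag_union_offDiag, Finset.sum_product, Finset.sum_diag] at hsplit
  simp only [Finset.sum_add_distrib, Finset.sum_const, Finset.card_univ, nsmul_eq_mul,
    ← Finset.mul_sum] at hsplit ⊢
  linear_combination -hsplit

section Pairwise

variable {ι E : Type*} [Fintype ι] [DecidableEq ι] [SeminormedAddCommGroup E]

theorem sum_offDiag_norm_sub_sq_le (g h p : ι → E) (P : E) :
    ∑ q ∈ (univ : Finset ι).offDiag, ‖g q.1 - g q.2‖ ^ 2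
      ≤ 2 * (Fintype.card ι - 1) * (8 * ∑ i, ‖g i - h i‖ ^ 2 + 8 * ∑ i, ‖h i - p i‖ ^ 2
        + 4 * ∑ i, ‖p i - P‖ ^ 2) := by
  set ψ : ι → ℝ := fun i => 8 * ‖g i - h i‖ ^ 2 + 8 * ‖h i - p i‖ ^ 2 + 4 * ‖p i - P‖ ^ 2
  calc ∑ q ∈ (univ : Finset ι).offDiag, ‖g q.1 - g q.2‖ ^ 2
      ≤ ∑ q ∈ (univ : Finset ι).offDiag, (ψ q.1 + ψ q.2) :=
        sum_le_sum fun q _ => norm_sub_sq_le_split _ _ _ _ _ _ P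
    _ = 2 * (Fintype.card ι - 1) * ∑ i, ψ i := Finset.sum_offDiag_add ψ
    _ = _ := by simp only [ψ, Finset.sum_add_distrib, ← Finset.mul_sum]

variable {Ω : Type*} [MeasurableSpace Ω] {μ : Measure Ω} [IsProbabilityMeasure μ]

theorem offDiag_mean_integral_norm_sub_sq_le (hG : 1 < Fintype.card ι)
    (g h p : ι → Ω → E) (P : Ω → E) {B ζ : ℝ}
    (hhet : ∀ ω, 1 / (Fintype.card ι : ℝ) * ∑ i, ‖p i ω - P ω‖ ^ 2 ≤ B * ‖P ω‖ ^ 2 + ζ ^ 2)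
    (hgh : ∀ i, Integrable (fun ω => ‖g i ω - h i ω‖ ^ 2) μ)
    (hhp : ∀ i, Integrable (fun ω => ‖h i ω - p i ω‖ ^ 2) μ)
    (hP : Integrable (fun ω => ‖P ω‖ ^ 2) μ)
    (hgg : ∀ i l, Integrable (fun ω => ‖g i ω - g l ω‖ ^ 2) μ) :
    1 / ((Fintype.card ι : ℝ) * (Fintype.card ι - 1)) *
        ∑ q ∈ (univ : Finset ι).offDiag, ∫ ω, ‖g q.1 ω - g q.2 ω‖ ^ 2 ∂μ
      ≤ 16 * (1 / (Fintype.card ι : ℝ) * ∑ i, ∫ ω, ‖g i ω - h i ω‖ ^ 2 ∂μ)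
        + 16 * (1 / (Fintype.card ι : ℝ) * ∑ i, ∫ ω, ‖h i ω - p i ω‖ ^ 2 ∂μ)
        + 8 * (B * ∫ ω, ‖P ω‖ ^ 2 ∂μ + ζ ^ 2) := by
  have hG_one_lt : (1 : ℝ) < Fintype.card ι := by exact_mod_cast hG
  set G : ℝ := (Fintype.card ι : ℝ)
  have hG_pos : 0 < G := by linarith
  have hG_sub_one : 0 < G - 1 := by linarith
  have hpointwise : ∀ ω, ∑ q ∈ (univ : Finset ι).offDiag, ‖g q.1 ω - g q.2 ω‖ ^ 2
      ≤ 2 * (G - 1) * (8 * ∑ i, ‖g i ω - h i ω‖ ^ 2 + 8 * ∑ i, ‖h i ω - p i ω‖ ^ 2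
        + 4 * G * (B * ‖P ω‖ ^ 2 + ζ ^ 2)) := by
    intro ω
    have hhetω : ∑ i, ‖p i ω - P ω‖ ^ 2 ≤ G * (B * ‖P ω‖ ^ 2 + ζ ^ 2) := by
      rw [← div_le_iff₀' hG_pos]
      simpa [div_eq_inv_mul] using hhet ω
    linear_combination sum_offDiag_norm_sub_sq_le (g · ω) (h · ω) (p · ω) (P ω)
      + (8 * (G - 1)) * hhetω
  have hintegral := integral_mono (integrable_finsetSum _ fun q _ => hgg q.1 q.2)
    (by fun_prop) hpointwise
  rw [integral_finsetSum _ fun q _ => hgg q.1 q.2] at hintegral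
  simp (disch := fun_prop) only [integral_add, integral_const_mul, integral_finsetSum,
    integral_const, probReal_univ, one_smul] at hintegral
  calc _ ≤ 1 / (G * (G - 1)) * (2 * (G - 1) * (8 * ∑ i, ∫ ω, ‖g i ω - h i ω‖ ^ 2 ∂μ
          + 8 * ∑ i, ∫ ω, ‖h i ω - p i ω‖ ^ 2 ∂μ + 4 * G * (B * ∫ ω, ‖P ω‖ ^ 2 ∂μ + ζ ^ 2))) := by
        gcongr
    _ = _ := by field_simp; ring

end Pairwise

section Descent

open scoped RealInnerProductSpace

variable {F : Type*} [NormedAddCommGroup F] [InnerProductSpace ℝ F] [CompleteSpace F]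
  {f : F → ℝ}

theorem HasGradientAt.hasDerivAt_comp_add_smul {f' x v : F} {t : ℝ}
    (hf : HasGradientAt f f' (x + t • v)) :
    HasDerivAt (fun t : ℝ => f (x + t • v)) ⟪f', v⟫ t := by
  have hline : HasDerivAt (fun t : ℝ => x + t • v) v t := by
    simpa using ((hasDerivAt_id t).smul_const v).const_add x
  have := hf.hasFDerivAt.comp_hasDerivAt t hline
  rwa [InnerProductSpace.toDual_apply_apply] at this

theorem Differentiable.apply_le_add_inner_gradient_add (hf : Differentiable ℝ f) {L : ℝ}
    (hL : ∀ a b, ‖gradient f a - gradient f b‖ ≤ L * ‖a - b‖) (x y : F) :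
    f y ≤ f x + ⟪gradient f x, y - x⟫ + L / 2 * ‖y - x‖ ^ 2 := by
  set v := y - x
  set φ : ℝ → ℝ := fun t => f (x + t • v) - t * ⟪gradient f x, v⟫ - L / 2 * t ^ 2 * ‖v‖ ^ 2
  have hφ : ∀ t, HasDerivAt φ
      (⟪gradient f (x + t • v), v⟫ - ⟪gradient f x, v⟫ - L * t * ‖v‖ ^ 2) t := by
    intro t
    have hquad : HasDerivAt (fun t : ℝ => L / 2 * t ^ 2 * ‖v‖ ^ 2) (L * t * ‖v‖ ^ 2) t := by
      refine (((hasDerivAt_pow 2 t).const_mul (L / 2)).mul_const (‖v‖ ^ 2)).congr_deriv ?_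
      simp only [Nat.cast_ofNat, Nat.add_one_sub_one, pow_one]
      ring
    exact (((hf _).hasGradientAt.hasDerivAt_comp_add_smul).sub
      (hasDerivAt_mul_const _)).sub hquad
  have hslope : ∀ t, 0 ≤ t →
      ⟪gradient f (x + t • v), v⟫ - ⟪gradient f x, v⟫ ≤ L * t * ‖v‖ ^ 2 := fun t ht =>
    calc _ = ⟪gradient f (x + t • v) - gradient f x, v⟫ := (inner_sub_left _ _ _).symm
      _ ≤ ‖gradient f (x + t • v) - gradient f x‖ * ‖v‖ := real_inner_le_norm _ _
      _ ≤ L * ‖x + t • v - x‖ * ‖v‖ := mul_le_mul_of_nonneg_right (hL _ _) (norm_nonneg _)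
      _ = L * t * ‖v‖ ^ 2 := by
        rw [add_sub_cancel_left, norm_smul, Real.norm_of_nonneg ht]; ring
  have hanti : AntitoneOn φ (Set.Icc 0 1) :=
    antitoneOn_of_deriv_nonpos (convex_Icc 0 1)
      (HasDerivAt.continuousOn fun t _ => hφ t)
      (fun t _ => (hφ t).differentiableAt.differentiableWithinAt)
      (fun t ht => by
        rw [interior_Icc] at ht
        rw [(hφ t).deriv]
        linarith [hslope t ht.1.le])
  have h01 := hanti (Set.left_mem_Icc.2 zero_le_one) (Set.right_mem_Icc.2 zero_le_one) zero_le_one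
  simp only [φ, v, one_smul, zero_smul, add_zero, add_sub_cancel] at h01
  linarith

theorem Differentiable.apply_le_of_eq_sub_smul (hf : Differentiable ℝ f) {L : ℝ}
    (hL : ∀ a b, ‖gradient f a - gradient f b‖ ≤ L * ‖a - b‖) {γ : ℝ} (hγ : 0 < γ)
    {x y v : F} (hy : y = x - γ • v) :
    f y ≤ f x - γ / 2 * ‖gradient f x‖ ^ 2 - (1 / (2 * γ) - L / 2) * ‖y - x‖ ^ 2
      + γ / 2 * ‖v - gradient f x‖ ^ 2 := by
  have hyx : y - x = -(γ • v) := by rw [hy]; abel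
  have hinner : ⟪gradient f x, y - x⟫ = -(γ * ⟪v, gradient f x⟫) := by
    rw [hyx, inner_neg_right, real_inner_smul_right, real_inner_comm]
  have hnorm : 1 / (2 * γ) * ‖y - x‖ ^ 2 = γ / 2 * ‖v‖ ^ 2 := by
    rw [hyx, norm_neg, norm_smul, Real.norm_of_nonneg hγ.le]
    field_simp
  have hdesc := hf.apply_le_add_inner_gradient_add hL x y
  rw [hinner] at hdesc
  linear_combination hdesc + hnorm - γ / 2 * norm_sub_sq_real v (gradient f x)

theorem Differentiable.integral_apply_le_of_eq_sub_smul {Ω : Type*} [MeasurableSpace Ω]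
    {μ : Measure Ω} (hf : Differentiable ℝ f) {L : ℝ}
    (hL : ∀ a b, ‖gradient f a - gradient f b‖ ≤ L * ‖a - b‖) {γ s : ℝ} (hγ : 0 < γ)
    (hs : 0 < s) {x y v a b : Ω → F} (hy : ∀ ω, y ω = x ω - γ • v ω)
    (hfy : Integrable (fun ω => f (y ω)) μ) (hfx : Integrable (fun ω => f (x ω)) μ)
    (hgrad : Integrable (fun ω => ‖gradient f (x ω)‖ ^ 2) μ)
    (hyx : Integrable (fun ω => ‖y ω - x ω‖ ^ 2) μ)
    (hva : Integrable (fun ω => ‖v ω - a ω‖ ^ 2) μ)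
    (hab : Integrable (fun ω => ‖a ω - b ω‖ ^ 2) μ)
    (hbgrad : Integrable (fun ω => ‖b ω - gradient f (x ω)‖ ^ 2) μ) :
    ∫ ω, f (y ω) ∂μ
      ≤ ∫ ω, f (x ω) ∂μ - γ / 2 * ∫ ω, ‖gradient f (x ω)‖ ^ 2 ∂μ
        - (1 / (2 * γ) - L / 2) * ∫ ω, ‖y ω - x ω‖ ^ 2 ∂μ
        + γ * (1 + s) / 2 * ∫ ω, ‖v ω - a ω‖ ^ 2 ∂μ
        + γ * (1 + s⁻¹) * ∫ ω, ‖a ω - b ω‖ ^ 2 ∂μ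
        + γ * (1 + s⁻¹) * ∫ ω, ‖b ω - gradient f (x ω)‖ ^ 2 ∂μ := by
  have hpointwise : ∀ ω, f (y ω) - f (x ω)
      ≤ -(γ / 2 * ‖gradient f (x ω)‖ ^ 2) - (1 / (2 * γ) - L / 2) * ‖y ω - x ω‖ ^ 2
        + γ * (1 + s) / 2 * ‖v ω - a ω‖ ^ 2 + γ * (1 + s⁻¹) * ‖a ω - b ω‖ ^ 2
        + γ * (1 + s⁻¹) * ‖b ω - gradient f (x ω)‖ ^ 2 := fun ω => by
    linear_combination hf.apply_le_of_eq_sub_smul hL hγ (hy ω)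
      + γ / 2 * norm_sub_sq_le_three_of_pos (v ω) (a ω) (b ω) (gradient f (x ω)) hs
  have hintegral := integral_mono (hfy.sub hfx) (by fun_prop) hpointwise
  simp (disch := fun_prop) only [Pi.sub_apply, integral_add, integral_sub, integral_neg,
    integral_const_mul] at hintegral
  rw [integral_sub hfy hfx] at hintegral
  linarith

end Descent

theorem descent_lemma_byz_dasha_page_general
    {d : ℕ} {ι : Type*} [Fintype ι] [DecidableEq ι]
    (hG : 2 ≤ Fintype.card ι)
    -- local loss functions and their average
    (fS : ι → EuclideanSpace ℝ (Fin d) → ℝ)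
    (f : EuclideanSpace ℝ (Fin d) → ℝ)
    (hf : ∀ x, f x = (1 / (Fintype.card ι : ℝ)) * ∑ i, fS i x)
    (hdiff : ∀ i, Differentiable ℝ (fS i))
    -- L-smoothness of f
    (L : ℝ)
    (hsmooth : ∀ x y, ‖gradient f x - gradient f y‖ ≤ L * ‖x - y‖)
    -- (B, ζ²)-heterogeneity
    (B ζ : ℝ)
    (hhet : ∀ x, (1 / (Fintype.card ι : ℝ)) *
        ∑ i, ‖gradient (fS i) x - gradient f x‖ ^ 2
      ≤ B * ‖gradient f x‖ ^ 2 + ζ ^ 2)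
    -- constants
    (c δ γ s : ℝ) (hc : 0 < c) (hδ0 : 0 ≤ δ) (hγ : 0 < γ) (hs : 0 < s)
    -- underlying probability space and random vectors
    {Ω : Type*} [MeasurableSpace Ω] (μ : Measure Ω) [IsProbabilityMeasure μ]
    (xt : Ω → EuclideanSpace ℝ (Fin d))
    (g : ι → Ω → EuclideanSpace ℝ (Fin d))
    (h : ι → Ω → EuclideanSpace ℝ (Fin d))
    (gt : Ω → EuclideanSpace ℝ (Fin d))
    (xt1 : Ω → EuclideanSpace ℝ (Fin d))
    (hstep : ∀ ω, xt1 ω = xt ω - γ • gt ω)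
    -- robust aggregation bound
    (hagg : ∫ ω, ‖gt ω - (Fintype.card ι : ℝ)⁻¹ • ∑ i, g i ω‖ ^ 2 ∂μ
      ≤ c * δ * ((1 / ((Fintype.card ι : ℝ) * ((Fintype.card ι : ℝ) - 1))) *
          ∑ q ∈ Finset.univ.offDiag, ∫ ω, ‖g q.1 ω - g q.2 ω‖ ^ 2 ∂μ))
    -- integrability of all relevant quantities
    (hint1 : Integrable (fun ω => f (xt1 ω)) μ)
    (hint2 : Integrable (fun ω => f (xt ω)) μ)
    (hint3 : Integrable (fun ω => ‖gradient f (xt ω)‖ ^ 2) μ)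
    (hint4 : Integrable (fun ω => ‖xt1 ω - xt ω‖ ^ 2) μ)
    (hint5 : ∀ i, Integrable (fun ω => ‖g i ω - h i ω‖ ^ 2) μ)
    (hint6 : ∀ i, Integrable (fun ω => ‖h i ω - gradient (fS i) (xt ω)‖ ^ 2) μ)
    (hint7 : Integrable
      (fun ω => ‖(Fintype.card ι : ℝ)⁻¹ • ∑ i, g i ω
        - (Fintype.card ι : ℝ)⁻¹ • ∑ i, h i ω‖ ^ 2) μ)
    (hint8 : Integrable
      (fun ω => ‖(Fintype.card ι : ℝ)⁻¹ • ∑ i, h i ω - gradient f (xt ω)‖ ^ 2) μ)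
    (hint9 : ∀ i l : ι, Integrable (fun ω => ‖g i ω - g l ω‖ ^ 2) μ)
    (hint10 : Integrable
      (fun ω => ‖gt ω - (Fintype.card ι : ℝ)⁻¹ • ∑ i, g i ω‖ ^ 2) μ) :
    ∫ ω, f (xt1 ω) ∂μ
      ≤ ∫ ω, f (xt ω) ∂μ
        - (γ * (1 - 8 * B * c * δ * (1 + s)) / 2) *
            ∫ ω, ‖gradient f (xt ω)‖ ^ 2 ∂μ
        - (1 / (2 * γ) - L / 2) * ∫ ω, ‖xt1 ω - xt ω‖ ^ 2 ∂μ
        + 8 * γ * c * δ * (1 + s) *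
            ((1 / (Fintype.card ι : ℝ)) * ∑ i, ∫ ω, ‖g i ω - h i ω‖ ^ 2 ∂μ)
        + 8 * γ * c * δ * (1 + s) *
            ((1 / (Fintype.card ι : ℝ)) *
              ∑ i, ∫ ω, ‖h i ω - gradient (fS i) (xt ω)‖ ^ 2 ∂μ)
        + γ * (1 + s⁻¹) *
            ∫ ω, ‖(Fintype.card ι : ℝ)⁻¹ • ∑ i, g i ω
              - (Fintype.card ι : ℝ)⁻¹ • ∑ i, h i ω‖ ^ 2 ∂μ
        + γ * (1 + s⁻¹) *
            ∫ ω, ‖(Fintype.card ι : ℝ)⁻¹ • ∑ i, h i ω - gradient f (xt ω)‖ ^ 2 ∂μ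
        + 4 * γ * c * δ * (1 + s) * ζ ^ 2 := by
  have hfd : Differentiable ℝ f := by
    rw [show f = fun x => 1 / (Fintype.card ι : ℝ) * ∑ i, fS i x from funext hf]
    fun_prop
  have hdescent := hfd.integral_apply_le_of_eq_sub_smul hsmooth hγ hs hstep hint1 hint2 hint3
    hint4 hint10 hint7 hint8
  have hpairs := offDiag_mean_integral_norm_sub_sq_le hG g h
    (fun i ω => gradient (fS i) (xt ω)) (fun ω => gradient f (xt ω)) (fun ω => hhet (xt ω))
    hint5 hint6 hint3 hint9
  linear_combination hdescent + γ * (1 + s) / 2 * hagg + γ * (1 + s) / 2 * (c * δ) * hpairs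

/-- Descent Lemma for Byz-DASHA-PAGE. -/
theorem descent_lemma_byz_dasha_page
    {d : ℕ} {ι : Type*} [Fintype ι] [DecidableEq ι]
    (hG : 2 ≤ Fintype.card ι)
    -- local loss functions and their average
    (fS : ι → EuclideanSpace ℝ (Fin d) → ℝ)
    (f : EuclideanSpace ℝ (Fin d) → ℝ)
    (hf : ∀ x, f x = (1 / (Fintype.card ι : ℝ)) * ∑ i, fS i x)
    (hdiff : ∀ i, Differentiable ℝ (fS i))
    -- L-smoothness of f
    (L : ℝ) (hL : 0 ≤ L)
    (hsmooth : ∀ x y, ‖gradient f x - gradient f y‖ ≤ L * ‖x - y‖)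
    -- (B, ζ²)-heterogeneity
    (B ζ : ℝ) (hB : 0 ≤ B) (hζ : 0 ≤ ζ)
    (hhet : ∀ x, (1 / (Fintype.card ι : ℝ)) *
        ∑ i, ‖gradient (fS i) x - gradient f x‖ ^ 2
      ≤ B * ‖gradient f x‖ ^ 2 + ζ ^ 2)
    -- constants
    (c δ γ s : ℝ) (hc : 0 < c) (hδ0 : 0 ≤ δ) (hδ : δ < 1 / 2) (hγ : 0 < γ) (hs : 0 < s)
    -- underlying probability space and random vectors
    {Ω : Type*} [MeasurableSpace Ω] (μ : Measure Ω) [IsProbabilityMeasure μ]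
    (xt : Ω → EuclideanSpace ℝ (Fin d))
    (g : ι → Ω → EuclideanSpace ℝ (Fin d))
    (h : ι → Ω → EuclideanSpace ℝ (Fin d))
    (gt : Ω → EuclideanSpace ℝ (Fin d))
    (xt1 : Ω → EuclideanSpace ℝ (Fin d))
    (hstep : ∀ ω, xt1 ω = xt ω - γ • gt ω)
    -- robust aggregation bound
    (hagg : ∫ ω, ‖gt ω - (Fintype.card ι : ℝ)⁻¹ • ∑ i, g i ω‖ ^ 2 ∂μ
      ≤ c * δ * ((1 / ((Fintype.card ι : ℝ) * ((Fintype.card ι : ℝ) - 1))) *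
          ∑ q ∈ Finset.univ.offDiag, ∫ ω, ‖g q.1 ω - g q.2 ω‖ ^ 2 ∂μ))
    -- integrability of all relevant quantities
    (hint1 : Integrable (fun ω => f (xt1 ω)) μ)
    (hint2 : Integrable (fun ω => f (xt ω)) μ)
    (hint3 : Integrable (fun ω => ‖gradient f (xt ω)‖ ^ 2) μ)
    (hint4 : Integrable (fun ω => ‖xt1 ω - xt ω‖ ^ 2) μ)
    (hint5 : ∀ i, Integrable (fun ω => ‖g i ω - h i ω‖ ^ 2) μ)
    (hint6 : ∀ i, Integrable (fun ω => ‖h i ω - gradient (fS i) (xt ω)‖ ^ 2) μ)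
    (hint7 : Integrable
      (fun ω => ‖(Fintype.card ι : ℝ)⁻¹ • ∑ i, g i ω
        - (Fintype.card ι : ℝ)⁻¹ • ∑ i, h i ω‖ ^ 2) μ)
    (hint8 : Integrable
      (fun ω => ‖(Fintype.card ι : ℝ)⁻¹ • ∑ i, h i ω - gradient f (xt ω)‖ ^ 2) μ)
    (hint9 : ∀ i l : ι, Integrable (fun ω => ‖g i ω - g l ω‖ ^ 2) μ)
    (hint10 : Integrable
      (fun ω => ‖gt ω - (Fintype.card ι : ℝ)⁻¹ • ∑ i, g i ω‖ ^ 2) μ) :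
    ∫ ω, f (xt1 ω) ∂μ
      ≤ ∫ ω, f (xt ω) ∂μ
        - (γ * (1 - 8 * B * c * δ * (1 + s)) / 2) *
            ∫ ω, ‖gradient f (xt ω)‖ ^ 2 ∂μ
        - (1 / (2 * γ) - L / 2) * ∫ ω, ‖xt1 ω - xt ω‖ ^ 2 ∂μ
        + 8 * γ * c * δ * (1 + s) *
            ((1 / (Fintype.card ι : ℝ)) * ∑ i, ∫ ω, ‖g i ω - h i ω‖ ^ 2 ∂μ)
        + 8 * γ * c * δ * (1 + s) *
            ((1 / (Fintype.card ι : ℝ)) *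
              ∑ i, ∫ ω, ‖h i ω - gradient (fS i) (xt ω)‖ ^ 2 ∂μ)
        + γ * (1 + s⁻¹) *
            ∫ ω, ‖(Fintype.card ι : ℝ)⁻¹ • ∑ i, g i ω
              - (Fintype.card ι : ℝ)⁻¹ • ∑ i, h i ω‖ ^ 2 ∂μ
        + γ * (1 + s⁻¹) *
            ∫ ω, ‖(Fintype.card ι : ℝ)⁻¹ • ∑ i, h i ω - gradient f (xt ω)‖ ^ 2 ∂μ
        + 4 * γ * c * δ * (1 + s) * ζ ^ 2 :=
  descent_lemma_byz_dasha_page_general hG fS f hf hdiff L hsmooth B ζ hhet c δ γ s hc hδ0 hγ hs μ xt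
    g h gt xt1 hstep hagg hint1 hint2 hint3 hint4 hint5 hint6 hint7 hint8 hint9 hint10
end

section
/- (Recursion for the individual compression errors in Byz-DASHA-PAGE.) Under the same update rules as in the preceding setting (g_i^{t+1} = g_i^t + 𝒬_i(h_i^{t+1} − h_i^t − a(g_i^t − h_i^t)) with ω-unbiased compressors 𝒬_i; h_i^{t+1} = ∇f_i(x^{t+1}) with probability p and h_i^{t+1} = h_i^t + Δ̂_i(x^{t+1}, x^t) otherwise): (1/G) Σ_{i∈𝒢} E‖g_i^{t+1} − h_i^{t+1}‖² ≤ (2a²ω + (1−a)²)·(1/G) Σ_{i∈𝒢} E‖g_i^t − h_i^t‖² + 4pω·(1/G) Σ_{i∈𝒢} E‖h_i^t − ∇f_i(x^t)‖² + 2ω·((1−p)𝓛±²/b + 2(L±² + L²))·E‖x^{t+1} − x^t‖². -/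
/-!
Fix the past and a worker, and write `v = gᵗ - hᵗ` and `u = hᵗ⁺¹ - hᵗ`. Then
`gᵗ⁺¹ - hᵗ⁺¹ = (𝒬(u - a v) - (u - a v)) + (1 - a) v`, whose first summand has conditional mean
zero, so the conditional second moment is at most
`ω‖u - a v‖² + (1 - a)²‖v‖² ≤ 2ω‖u‖² + (2a²ω + (1 - a)²)‖v‖²`.
On a synchronisation step (probability `p`), `u = ∇fᵢ(xᵗ⁺¹) - hᵗ` and
`‖u‖² ≤ 2‖hᵗ - ∇fᵢ(xᵗ)‖² + 2‖∇fᵢ(xᵗ⁺¹) - ∇fᵢ(xᵗ)‖²`; otherwise `u` is the mini-batch estimator,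
whose second moment is its variance plus `‖∇fᵢ(xᵗ⁺¹) - ∇fᵢ(xᵗ)‖²`. Averaged over the workers, the
local Hessian variance bounds the variances, and the global Hessian variance together with the
smoothness of `f` bounds the gradient differences, by multiples of `‖xᵗ⁺¹ - xᵗ‖²`.

The conditioning is done with iterated integrals of `ℝ≥0∞`-valued functions, for which Tonelli's
inequality `∫⁻ z, f z ∂μ.prod ν ≤ ∫⁻ x, ∫⁻ y, f (x, y) ∂ν ∂μ` needs no measurability.
-/

open MeasureTheory Finset

open scoped ENNReal

section SecondMoment

variable {E : Type*} [NormedAddCommGroup E] [InnerProductSpace ℝ E]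
  {Ω : Type*} [MeasurableSpace Ω] {ν : Measure Ω}

lemma integrable_norm_add_const_sq [IsFiniteMeasure ν] {X : Ω → E} (c : E)
    (hX : Integrable X ν) (hX2 : Integrable (fun ω ↦ ‖X ω‖ ^ 2) ν) :
    Integrable (fun ω ↦ ‖X ω + c‖ ^ 2) ν := by
  simp_rw [norm_add_sq_real]
  exact (hX2.add ((hX.inner_const c).const_mul 2)).add (integrable_const _)

lemma integrable_norm_sq_of_integrable_norm_sub_sq [IsFiniteMeasure ν] {D : Ω → E} {m : E}
    (hD : Integrable D ν) (hD2 : Integrable (fun ω ↦ ‖D ω - m‖ ^ 2) ν) :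
    Integrable (fun ω ↦ ‖D ω‖ ^ 2) ν := by
  simpa using integrable_norm_add_const_sq m (hD.sub (integrable_const m)) hD2

variable [CompleteSpace E]

lemma integral_norm_add_const_sq_of_integral_eq_zero [IsProbabilityMeasure ν] {X : Ω → E}
    (c : E) (hX : Integrable X ν) (hX2 : Integrable (fun ω ↦ ‖X ω‖ ^ 2) ν)
    (hmean : ∫ ω, X ω ∂ν = 0) :
    ∫ ω, ‖X ω + c‖ ^ 2 ∂ν = ∫ ω, ‖X ω‖ ^ 2 ∂ν + ‖c‖ ^ 2 := by
  have hcross : ∫ ω, 2 * inner ℝ c (X ω) ∂ν = 0 := by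
    rw [integral_const_mul, integral_inner hX, hmean, inner_zero_right, mul_zero]
  have hint : Integrable (fun ω ↦ 2 * inner ℝ c (X ω)) ν := (hX.const_inner c).const_mul 2
  simp_rw [norm_add_sq_real, real_inner_comm c (X _)]
  rw [integral_add (f := fun ω ↦ ‖X ω‖ ^ 2 + 2 * inner ℝ c (X ω)) (hX2.add hint)
      (integrable_const _), integral_add hX2 hint, hcross, integral_const, probReal_univ,
    one_smul, add_zero]

lemma integral_norm_sq_eq_of_integral_eq [IsProbabilityMeasure ν] {D : Ω → E} {m : E}
    (hD : Integrable D ν) (hD2 : Integrable (fun ω ↦ ‖D ω - m‖ ^ 2) ν)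
    (hmean : ∫ ω, D ω ∂ν = m) :
    ∫ ω, ‖D ω‖ ^ 2 ∂ν = ∫ ω, ‖D ω - m‖ ^ 2 ∂ν + ‖m‖ ^ 2 := by
  have hX : Integrable (fun ω ↦ D ω - m) ν := hD.sub (integrable_const m)
  have hX0 : ∫ ω, (D ω - m) ∂ν = 0 := by
    rw [integral_sub hD (integrable_const m), hmean, integral_const, probReal_univ, one_smul,
      sub_self]
  simpa using integral_norm_add_const_sq_of_integral_eq_zero m hX hD2 hX0

end SecondMoment

lemma norm_add_sq_le_two_mul_s8 {F : Type*} [SeminormedAddCommGroup F] (u v : F) :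
    ‖u + v‖ ^ 2 ≤ 2 * (‖u‖ ^ 2 + ‖v‖ ^ 2) :=
  (pow_le_pow_left₀ (norm_nonneg _) (norm_add_le u v) 2).trans add_sq_le

lemma norm_sub_sq_le_two_mul_s8 {F : Type*} [SeminormedAddCommGroup F] (u v : F) :
    ‖u - v‖ ^ 2 ≤ 2 * (‖u‖ ^ 2 + ‖v‖ ^ 2) := by
  simpa only [sub_eq_add_neg, norm_neg] using norm_add_sq_le_two_mul_s8 u (-v)

section Compressor

variable {E : Type*} [NormedAddCommGroup E] [InnerProductSpace ℝ E] [CompleteSpace E]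
  {Ω : Type*} [MeasurableSpace Ω]

structure IsUnbiasedCompressor (ν : Measure Ω) (Q : E → Ω → E) (ω : ℝ) : Prop where
  integrable : ∀ z, Integrable (Q z) ν
  integrable_sq : ∀ z, Integrable (fun w ↦ ‖Q z w - z‖ ^ 2) ν
  integral_eq : ∀ z, ∫ w, Q z w ∂ν = z
  integral_sq_le : ∀ z, ∫ w, ‖Q z w - z‖ ^ 2 ∂ν ≤ ω * ‖z‖ ^ 2

namespace IsUnbiasedCompressor

variable {ν : Measure Ω} [IsProbabilityMeasure ν] {Q : E → Ω → E} {ω : ℝ}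

lemma lintegral_norm_sub_add_sq_le (hQ : IsUnbiasedCompressor ν Q ω) (z c : E) :
    ∫⁻ w, ENNReal.ofReal (‖Q z w - z + c‖ ^ 2) ∂ν ≤ ENNReal.ofReal (ω * ‖z‖ ^ 2 + ‖c‖ ^ 2) := by
  have hX : Integrable (fun w ↦ Q z w - z) ν := (hQ.integrable z).sub (integrable_const z)
  have hmean : ∫ w, (Q z w - z) ∂ν = 0 := by
    rw [integral_sub (hQ.integrable z) (integrable_const z), hQ.integral_eq, integral_const,
      probReal_univ, one_smul, sub_self]
  rw [← ofReal_integral_eq_lintegral_ofReal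
      (integrable_norm_add_const_sq c hX (hQ.integrable_sq z)) (ae_of_all _ fun _ ↦ by positivity),
    integral_norm_add_const_sq_of_integral_eq_zero c hX (hQ.integrable_sq z) hmean]
  exact ENNReal.ofReal_le_ofReal (by linarith [hQ.integral_sq_le z])

lemma lintegral_momentum_error_le (hQ : IsUnbiasedCompressor ν Q ω) (hω : 0 ≤ ω) (a : ℝ)
    (g h h' : E) :
    ∫⁻ w, ENNReal.ofReal (‖g + Q (h' - h - a • (g - h)) w - h'‖ ^ 2) ∂ν
      ≤ ENNReal.ofReal (2 * ω * ‖h' - h‖ ^ 2 + (2 * a ^ 2 * ω + (1 - a) ^ 2) * ‖g - h‖ ^ 2) := by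
  have herror : ∀ w, g + Q (h' - h - a • (g - h)) w - h'
      = Q (h' - h - a • (g - h)) w - (h' - h - a • (g - h)) + (1 - a) • (g - h) :=
    fun w ↦ by module
  simp_rw [herror]
  refine (hQ.lintegral_norm_sub_add_sq_le _ _).trans (ENNReal.ofReal_le_ofReal ?_)
  have hsplit := norm_sub_sq_le_two_mul_s8 (h' - h) (a • (g - h))
  simp only [norm_smul, mul_pow, Real.norm_eq_abs, sq_abs] at hsplit ⊢
  linarith [mul_le_mul_of_nonneg_left hsplit hω]

end IsUnbiasedCompressor

end Compressor

section Lintegral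

variable {α β : Type*} [MeasurableSpace α] [MeasurableSpace β] {μ : Measure α} {ν : Measure β}

lemma lintegral_prod_le_of_forall_le {f : α × β → ℝ≥0∞} {g : α → ℝ≥0∞}
    (h : ∀ x, ∫⁻ y, f (x, y) ∂ν ≤ g x) : ∫⁻ z, f z ∂μ.prod ν ≤ ∫⁻ x, g x ∂μ :=
  (lintegral_prod_le f).trans (lintegral_mono h)

lemma sum_lintegral_le_lintegral_sum {ι : Type*} (s : Finset ι) (f : ι → α → ℝ≥0∞) :
    ∑ i ∈ s, ∫⁻ x, f i x ∂μ ≤ ∫⁻ x, ∑ i ∈ s, f i x ∂μ := by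
  classical
  induction s using Finset.induction_on with
  | empty => simp
  | insert i s hi ih =>
    simp only [Finset.sum_insert hi]
    exact (add_le_add_right ih _).trans (le_lintegral_add _ _)

lemma ofReal_integral_le_lintegral_ofReal {f : α → ℝ} (hf : 0 ≤ f) :
    ENNReal.ofReal (∫ x, f x ∂μ) ≤ ∫⁻ x, ENNReal.ofReal (f x) ∂μ := by
  by_cases hfi : Integrable f μ
  · exact (ofReal_integral_eq_lintegral_ofReal hfi (ae_of_all _ hf)).le
  · simp [integral_undef hfi]

lemma lintegral_comp_eval {ι : Type*} [Fintype ι] {X : ι → Type*} [∀ i, MeasurableSpace (X i)]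
    {ν : ∀ i, Measure (X i)} [∀ i, IsProbabilityMeasure (ν i)] (i : ι) {f : X i → ℝ≥0∞}
    (hf : AEMeasurable f (ν i)) : ∫⁻ w, f (w i) ∂Measure.pi ν = ∫⁻ x, f x ∂ν i := by
  rw [← (measurePreserving_eval ν i).map_eq] at hf ⊢
  exact (lintegral_map' hf (measurable_pi_apply i).aemeasurable).symm

lemma lintegral_bool_le_ofReal {μ : Measure Bool} [IsProbabilityMeasure μ] {p : ℝ}
    (hp0 : 0 ≤ p) (hp1 : p ≤ 1) (hμ : μ {true} = ENNReal.ofReal p) {H : Bool → ℝ≥0∞} {X Y : ℝ}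
    (hX : 0 ≤ X) (hY : 0 ≤ Y) (hH₁ : H true ≤ ENNReal.ofReal X)
    (hH₀ : H false ≤ ENNReal.ofReal Y) :
    ∫⁻ c, H c ∂μ ≤ ENNReal.ofReal (p * X + (1 - p) * Y) := by
  have hμ₀ : μ {false} = ENNReal.ofReal (1 - p) := by
    have hcompl : ({true}ᶜ : Set Bool) = {false} := by ext c; cases c <;> simp
    rw [← hcompl, prob_compl_eq_one_sub (measurableSet_singleton true), hμ,
      ENNReal.ofReal_sub _ hp0, ENNReal.ofReal_one]
  rw [lintegral_fintype, Fintype.sum_bool, hμ, hμ₀,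
    ENNReal.ofReal_add (mul_nonneg hp0 hX) (mul_nonneg (sub_nonneg.2 hp1) hY),
    ENNReal.ofReal_mul hp0, ENNReal.ofReal_mul (sub_nonneg.2 hp1), mul_comm (H true),
    mul_comm (H false)]
  gcongr

end Lintegral

section Average

variable {α β : Type*} [MeasurableSpace α] [MeasurableSpace β] {μ : Measure α} {ν : Measure β}

lemma mul_sum_integral_le_integral_of_lintegral_le {ι : Type*} (s : Finset ι) {c : ℝ}
    (hc : 0 ≤ c) {F : ι → α → ℝ} {R : ι → β → ℝ} {W : β → ℝ} (hF : ∀ i x, 0 ≤ F i x)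
    (hR : ∀ i y, 0 ≤ R i y) (hW : Integrable W ν)
    (hFR : ∀ i, ∫⁻ x, ENNReal.ofReal (F i x) ∂μ ≤ ∫⁻ y, ENNReal.ofReal (R i y) ∂ν)
    (hRW : ∀ y, c * ∑ i ∈ s, R i y ≤ W y) :
    c * ∑ i ∈ s, ∫ x, F i x ∂μ ≤ ∫ y, W y ∂ν := by
  have hRs : ∀ y, 0 ≤ ∑ i ∈ s, R i y := fun y ↦ Finset.sum_nonneg fun i _ ↦ hR i y
  have hW0 : 0 ≤ W := fun y ↦ (mul_nonneg hc (hRs y)).trans (hRW y)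
  rw [← ENNReal.ofReal_le_ofReal_iff (integral_nonneg hW0),
    ofReal_integral_eq_lintegral_ofReal hW (ae_of_all _ hW0)]
  calc ENNReal.ofReal (c * ∑ i ∈ s, ∫ x, F i x ∂μ)
      = ENNReal.ofReal c * ∑ i ∈ s, ENNReal.ofReal (∫ x, F i x ∂μ) := by
        rw [ENNReal.ofReal_mul hc,
          ENNReal.ofReal_sum_of_nonneg fun i _ ↦ integral_nonneg (hF i)]
    _ ≤ ENNReal.ofReal c * ∫⁻ y, ∑ i ∈ s, ENNReal.ofReal (R i y) ∂ν := by
        gcongr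
        refine (Finset.sum_le_sum fun i _ ↦ ?_).trans (sum_lintegral_le_lintegral_sum s _)
        exact (ofReal_integral_le_lintegral_ofReal (hF i)).trans (hFR i)
    _ = ∫⁻ y, ENNReal.ofReal (c * ∑ i ∈ s, R i y) ∂ν := by
        rw [← lintegral_const_mul' _ _ ENNReal.ofReal_ne_top]
        simp_rw [ENNReal.ofReal_mul hc, ENNReal.ofReal_sum_of_nonneg fun i _ ↦ hR i _]
    _ ≤ ∫⁻ y, ENNReal.ofReal (W y) ∂ν := lintegral_mono fun y ↦ ENNReal.ofReal_le_ofReal (hRW y)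

end Average

section DashaPage

variable {E : Type*} [NormedAddCommGroup E] [InnerProductSpace ℝ E] [CompleteSpace E]
  {ι : Type*} [Fintype ι]
  {Ωb : ι → Type*} [∀ i, MeasurableSpace (Ωb i)] {νb : ∀ i, Measure (Ωb i)}
  [∀ i, IsProbabilityMeasure (νb i)]
  {Ωq : ι → Type*} [∀ i, MeasurableSpace (Ωq i)] {νq : ∀ i, Measure (Ωq i)}
  [∀ i, IsProbabilityMeasure (νq i)]
  {i : ι} {Q : E → Ωq i → E} {ω : ℝ}

lemma IsUnbiasedCompressor.lintegral_prod_pi_momentum_error_le {β : Type*} [MeasurableSpace β]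
    {μ : Measure β} (hQ : IsUnbiasedCompressor (νq i) Q ω) (hω : 0 ≤ ω) (a : ℝ) (g h : E)
    (h' : β → E) :
    ∫⁻ y, ENNReal.ofReal (‖g + Q (h' y.1 - h - a • (g - h)) (y.2 i) - h' y.1‖ ^ 2)
        ∂μ.prod (Measure.pi νq)
      ≤ ∫⁻ x, ENNReal.ofReal
          (2 * ω * ‖h' x - h‖ ^ 2 + (2 * a ^ 2 * ω + (1 - a) ^ 2) * ‖g - h‖ ^ 2) ∂μ := by
  refine lintegral_prod_le_of_forall_le fun x ↦ ?_
  have hmeas : AEMeasurable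
      (fun w ↦ ENNReal.ofReal (‖g + Q (h' x - h - a • (g - h)) w - h' x‖ ^ 2)) (νq i) :=
    (((aestronglyMeasurable_const.add (hQ.integrable _).aestronglyMeasurable).sub
      aestronglyMeasurable_const).norm.pow 2).aemeasurable.ennreal_ofReal
  rw [lintegral_comp_eval i hmeas]
  exact hQ.lintegral_momentum_error_le hω a g h (h' x)

lemma lintegral_pi_ofReal_mul_norm_sq_add_eq {D : Ωb i → E} {m : E} {α K : ℝ} (hα : 0 ≤ α)
    (hK : 0 ≤ K) (hD : Integrable D (νb i)) (hD2 : Integrable (fun x ↦ ‖D x - m‖ ^ 2) (νb i))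
    (hDmean : ∫ x, D x ∂νb i = m) :
    ∫⁻ wb, ENNReal.ofReal (α * ‖D (wb i)‖ ^ 2 + K) ∂Measure.pi νb
      = ENNReal.ofReal (α * (∫ x, ‖D x - m‖ ^ 2 ∂νb i + ‖m‖ ^ 2) + K) := by
  have hD2' := integrable_norm_sq_of_integrable_norm_sub_sq hD hD2
  have hint : Integrable (fun x ↦ α * ‖D x‖ ^ 2 + K) (νb i) :=
    (hD2'.const_mul _).add (integrable_const K)
  rw [lintegral_comp_eval i hint.aestronglyMeasurable.aemeasurable.ennreal_ofReal,
    ← ofReal_integral_eq_lintegral_ofReal hint (ae_of_all _ fun _ ↦ by positivity),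
    integral_add (hD2'.const_mul _) (integrable_const K), integral_const_mul,
    integral_norm_sq_eq_of_integral_eq hD hD2 hDmean, integral_const, probReal_univ, one_smul]

lemma lintegral_dashaPage_error_le {μc : Measure Bool} [IsProbabilityMeasure μc] {p : ℝ}
    (hp0 : 0 ≤ p) (hp1 : p ≤ 1) (hμc : μc {true} = ENNReal.ofReal p)
    (hQ : IsUnbiasedCompressor (νq i) Q ω) (hω : 0 ≤ ω) (a : ℝ) (g h φ₁ φ₀ : E)
    {D : Ωb i → E} (hD : Integrable D (νb i))
    (hD2 : Integrable (fun x ↦ ‖D x - (φ₁ - φ₀)‖ ^ 2) (νb i))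
    (hDmean : ∫ x, D x ∂νb i = φ₁ - φ₀) :
    ∫⁻ y, ENNReal.ofReal (‖g + Q ((if y.1 then φ₁ else h + D (y.2.1 i)) - h - a • (g - h))
          (y.2.2 i) - (if y.1 then φ₁ else h + D (y.2.1 i))‖ ^ 2)
        ∂μc.prod ((Measure.pi νb).prod (Measure.pi νq))
      ≤ ENNReal.ofReal ((2 * a ^ 2 * ω + (1 - a) ^ 2) * ‖g - h‖ ^ 2 + 4 * p * ω * ‖h - φ₀‖ ^ 2
          + 2 * ω * (1 - p) * ∫ x, ‖D x - (φ₁ - φ₀)‖ ^ 2 ∂νb i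
          + 4 * ω * ‖φ₁ - φ₀‖ ^ 2) := by
  set K := (2 * a ^ 2 * ω + (1 - a) ^ 2) * ‖g - h‖ ^ 2
  set V := ∫ x, ‖D x - (φ₁ - φ₀)‖ ^ 2 ∂νb i
  have hV : 0 ≤ V := integral_nonneg fun _ ↦ by positivity
  calc _ ≤ ∫⁻ c, ∫⁻ wb, ENNReal.ofReal
          (2 * ω * ‖(if c then φ₁ else h + D (wb i)) - h‖ ^ 2 + K) ∂Measure.pi νb ∂μc :=
        lintegral_prod_le_of_forall_le fun c ↦ hQ.lintegral_prod_pi_momentum_error_le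
          (μ := Measure.pi νb) hω a g h fun wb ↦ if c then φ₁ else h + D (wb i)
    _ ≤ ENNReal.ofReal (p * (2 * ω * ‖φ₁ - h‖ ^ 2 + K)
          + (1 - p) * (2 * ω * (V + ‖φ₁ - φ₀‖ ^ 2) + K)) := by
        refine lintegral_bool_le_ofReal hp0 hp1 hμc (by positivity) (by positivity) ?_ ?_
        · simp
        · simp only [Bool.false_eq_true, if_false, add_sub_cancel_left]
          exact (lintegral_pi_ofReal_mul_norm_sq_add_eq (by positivity) (by positivity) hD hD2
            hDmean).le
    _ ≤ _ := by
        refine ENNReal.ofReal_le_ofReal ?_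
        have hsplit := norm_sub_sq_le_two_mul_s8 (φ₁ - φ₀) (h - φ₀)
        rw [sub_sub_sub_cancel_right] at hsplit
        linarith [mul_le_mul_of_nonneg_left hsplit (by positivity : 0 ≤ 2 * ω * p),
          mul_nonneg (mul_nonneg hω (sub_nonneg.2 hp1)) (sq_nonneg ‖φ₁ - φ₀‖)]

lemma lintegral_prod_dashaPage_error_le {Ω₀ : Type*} [MeasurableSpace Ω₀] {μ₀ : Measure Ω₀}
    {μc : Measure Bool} [IsProbabilityMeasure μc] {p : ℝ} (hp0 : 0 ≤ p) (hp1 : p ≤ 1)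
    (hμc : μc {true} = ENNReal.ofReal p) (hQ : IsUnbiasedCompressor (νq i) Q ω) (hω : 0 ≤ ω)
    (a : ℝ) (g h φ₁ φ₀ : Ω₀ → E) (D : Ω₀ → Ωb i → E) (hD : ∀ ω₀, Integrable (D ω₀) (νb i))
    (hD2 : ∀ ω₀, Integrable (fun x ↦ ‖D ω₀ x - (φ₁ ω₀ - φ₀ ω₀)‖ ^ 2) (νb i))
    (hDmean : ∀ ω₀, ∫ x, D ω₀ x ∂νb i = φ₁ ω₀ - φ₀ ω₀) :
    ∫⁻ w, ENNReal.ofReal (‖g w.1 + Q ((if w.2.1 then φ₁ w.1 else h w.1 + D w.1 (w.2.2.1 i))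
          - h w.1 - a • (g w.1 - h w.1)) (w.2.2.2 i)
          - (if w.2.1 then φ₁ w.1 else h w.1 + D w.1 (w.2.2.1 i))‖ ^ 2)
        ∂μ₀.prod (μc.prod ((Measure.pi νb).prod (Measure.pi νq)))
      ≤ ∫⁻ ω₀, ENNReal.ofReal ((2 * a ^ 2 * ω + (1 - a) ^ 2) * ‖g ω₀ - h ω₀‖ ^ 2
          + 4 * p * ω * ‖h ω₀ - φ₀ ω₀‖ ^ 2
          + 2 * ω * (1 - p) * ∫ x, ‖D ω₀ x - (φ₁ ω₀ - φ₀ ω₀)‖ ^ 2 ∂νb i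
          + 4 * ω * ‖φ₁ ω₀ - φ₀ ω₀‖ ^ 2) ∂μ₀ := by
  refine lintegral_prod_le_of_forall_le fun ω₀ ↦ ?_
  dsimp only
  exact lintegral_dashaPage_error_le hp0 hp1 hμc hQ hω a _ _ _ _ (hD ω₀) (hD2 ω₀) (hDmean ω₀)

end DashaPage

theorem local_compression_error_recursion_byz_dasha_page_general
    {d : ℕ} {ι : Type*} [Fintype ι]
    -- local loss functions and their average
    (fS : ι → EuclideanSpace ℝ (Fin d) → ℝ)
    (f : EuclideanSpace ℝ (Fin d) → ℝ)
    -- L-smoothness of f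
    (L : ℝ)
    (hsmooth : ∀ x y, ‖gradient f x - gradient f y‖ ≤ L * ‖x - y‖)
    -- global Hessian variance
    (Lpm : ℝ)
    (hGH : ∀ x y, (1 / (Fintype.card ι : ℝ)) *
          ∑ i, ‖gradient (fS i) x - gradient (fS i) y‖ ^ 2
        - ‖gradient f x - gradient f y‖ ^ 2
      ≤ Lpm ^ 2 * ‖x - y‖ ^ 2)
    -- probability of full-gradient synchronization and momentum
    (p a : ℝ) (hp0 : 0 < p) (hp1 : p ≤ 1)
    -- past randomness
    {Ω₀ : Type*} [MeasurableSpace Ω₀] (μ₀ : Measure Ω₀)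
    -- coin randomness (the same coin for all workers)
    (μc : Measure Bool) [IsProbabilityMeasure μc]
    (hcoin : μc {true} = ENNReal.ofReal p)
    -- mini-batch estimator randomness (independent across workers)
    {Ωb : ι → Type*} [∀ i, MeasurableSpace (Ωb i)]
    (νb : ∀ i, Measure (Ωb i)) [∀ i, IsProbabilityMeasure (νb i)]
    -- compressor randomness (independent across workers)
    {Ωq : ι → Type*} [∀ i, MeasurableSpace (Ωq i)]
    (νq : ∀ i, Measure (Ωq i)) [∀ i, IsProbabilityMeasure (νq i)]
    -- mini-batch estimators: conditionally unbiased, local Hessian variance with batch size b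
    (Dhat : (i : ι) → EuclideanSpace ℝ (Fin d) → EuclideanSpace ℝ (Fin d) →
      Ωb i → EuclideanSpace ℝ (Fin d))
    (hDint : ∀ i x y, Integrable (fun wb => Dhat i x y wb) (νb i))
    (hDint2 : ∀ i x y, Integrable
      (fun wb => ‖Dhat i x y wb - (gradient (fS i) x - gradient (fS i) y)‖ ^ 2) (νb i))
    (hDunbiased : ∀ i x y,
      ∫ wb, Dhat i x y wb ∂(νb i) = gradient (fS i) x - gradient (fS i) y)
    (b Lloc : ℝ)
    (hlocal : ∀ x y, (1 / (Fintype.card ι : ℝ)) *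
        ∑ i, ∫ wb, ‖Dhat i x y wb - (gradient (fS i) x - gradient (fS i) y)‖ ^ 2 ∂(νb i)
      ≤ (Lloc ^ 2 / b) * ‖x - y‖ ^ 2)
    -- unbiased compressors with variance parameter ω
    (omg : ℝ) (homg : 0 ≤ omg)
    (Q : (i : ι) → EuclideanSpace ℝ (Fin d) → Ωq i → EuclideanSpace ℝ (Fin d))
    (hQint : ∀ i z, Integrable (fun wq => Q i z wq) (νq i))
    (hQint2 : ∀ i z, Integrable (fun wq => ‖Q i z wq - z‖ ^ 2) (νq i))
    (hQunbiased : ∀ i z, ∫ wq, Q i z wq ∂(νq i) = z)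
    (hQvar : ∀ i z, ∫ wq, ‖Q i z wq - z‖ ^ 2 ∂(νq i) ≤ omg * ‖z‖ ^ 2)
    -- current iterates, estimators and shifts (measurable with respect to the past)
    (xt xt1 : Ω₀ → EuclideanSpace ℝ (Fin d))
    (gt ht : ι → Ω₀ → EuclideanSpace ℝ (Fin d))
    -- the new shifts: with probability p set to the full gradient,
    -- otherwise add a stochastic gradient difference
    (ht1 : ι → Ω₀ × Bool × (∀ i, Ωb i) × (∀ i, Ωq i) → EuclideanSpace ℝ (Fin d))
    (hht1 : ∀ i w, ht1 i w =
      if w.2.1 then gradient (fS i) (xt1 w.1)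
      else ht i w.1 + Dhat i (xt1 w.1) (xt w.1) (w.2.2.1 i))
    -- the new estimators: momentum variance reduction with compression
    (gt1 : ι → Ω₀ × Bool × (∀ i, Ωb i) × (∀ i, Ωq i) → EuclideanSpace ℝ (Fin d))
    (hgt1 : ∀ i w, gt1 i w =
      gt i w.1 + Q i (ht1 i w - ht i w.1 - a • (gt i w.1 - ht i w.1)) (w.2.2.2 i))
    -- integrability of the relevant squared norms
    (hint2 : ∀ i, Integrable (fun ω₀ => ‖gt i ω₀ - ht i ω₀‖ ^ 2) μ₀)
    (hint3 : Integrable (fun ω₀ => ‖xt1 ω₀ - xt ω₀‖ ^ 2) μ₀)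
    (hint4 : ∀ i, Integrable
      (fun ω₀ => ‖ht i ω₀ - gradient (fS i) (xt ω₀)‖ ^ 2) μ₀) :
    (1 / (Fintype.card ι : ℝ)) *
        ∑ i, ∫ w, ‖gt1 i w - ht1 i w‖ ^ 2
          ∂(μ₀.prod (μc.prod ((Measure.pi νb).prod (Measure.pi νq))))
      ≤ (2 * a ^ 2 * omg + (1 - a) ^ 2) *
          ((1 / (Fintype.card ι : ℝ)) *
            ∑ i, ∫ ω₀, ‖gt i ω₀ - ht i ω₀‖ ^ 2 ∂μ₀)
        + 4 * p * omg *
            ((1 / (Fintype.card ι : ℝ)) *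
              ∑ i, ∫ ω₀, ‖ht i ω₀ - gradient (fS i) (xt ω₀)‖ ^ 2 ∂μ₀)
        + 2 * omg * ((1 - p) * Lloc ^ 2 / b + 2 * (Lpm ^ 2 + L ^ 2)) *
            ∫ ω₀, ‖xt1 ω₀ - xt ω₀‖ ^ 2 ∂μ₀ := by
  have hQ : ∀ i, IsUnbiasedCompressor (νq i) (Q i) omg :=
    fun i ↦ ⟨hQint i, hQint2 i, hQunbiased i, hQvar i⟩
  have hE := ((integrable_finsetSum univ fun i _ ↦ hint2 i).const_mul
    (1 / (Fintype.card ι : ℝ))).const_mul (2 * a ^ 2 * omg + (1 - a) ^ 2)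
  have hS := ((integrable_finsetSum univ fun i _ ↦ hint4 i).const_mul
    (1 / (Fintype.card ι : ℝ))).const_mul (4 * p * omg)
  have hX := hint3.const_mul (2 * omg * ((1 - p) * Lloc ^ 2 / b + 2 * (Lpm ^ 2 + L ^ 2)))
  simp only [hgt1, hht1]
  have hworker := fun i ↦ lintegral_prod_dashaPage_error_le (μ₀ := μ₀) hp0.le hp1 hcoin (hQ i)
    homg a (gt i) (ht i) (fun ω₀ ↦ gradient (fS i) (xt1 ω₀)) (fun ω₀ ↦ gradient (fS i) (xt ω₀))
    (fun ω₀ ↦ Dhat i (xt1 ω₀) (xt ω₀)) (fun _ ↦ hDint i _ _) (fun _ ↦ hDint2 i _ _)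
    fun _ ↦ hDunbiased i _ _
  refine (mul_sum_integral_le_integral_of_lintegral_le univ (by positivity)
    (fun i w ↦ sq_nonneg _) (fun i ω₀ ↦ ?_) ((hE.add hS).add hX) hworker
    fun ω₀ ↦ ?_).trans_eq ?_
  · have h1p : 0 ≤ 1 - p := sub_nonneg.2 hp1
    have hvar : 0 ≤ ∫ wb, ‖Dhat i (xt1 ω₀) (xt ω₀) wb
        - (gradient (fS i) (xt1 ω₀) - gradient (fS i) (xt ω₀))‖ ^ 2 ∂νb i :=
      integral_nonneg fun _ ↦ sq_nonneg _
    positivity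
  · have hV := hlocal (xt1 ω₀) (xt ω₀)
    have hA := hGH (xt1 ω₀) (xt ω₀)
    have hL := pow_le_pow_left₀ (norm_nonneg _) (hsmooth (xt1 ω₀) (xt ω₀)) 2
    rw [mul_pow] at hL
    simp only [Pi.add_apply, Finset.sum_add_distrib, ← Finset.mul_sum, mul_add]
    linear_combination mul_le_mul_of_nonneg_left hV
        (mul_nonneg (by positivity) (sub_nonneg.2 hp1) : 0 ≤ 2 * omg * (1 - p))
      + mul_le_mul_of_nonneg_left (add_le_add hA hL) (by positivity : 0 ≤ 4 * omg)
  · rw [integral_add' (hE.add hS) hX, integral_add' hE hS, integral_const_mul, integral_const_mul,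
      integral_const_mul, integral_const_mul, integral_const_mul,
      integral_finsetSum _ fun i _ ↦ hint2 i, integral_finsetSum _ fun i _ ↦ hint4 i]

/-- Recursion for the individual compression errors in Byz-DASHA-PAGE. -/
theorem local_compression_error_recursion_byz_dasha_page
    {d : ℕ} {ι : Type*} [Fintype ι]
    -- local loss functions and their average
    (fS : ι → EuclideanSpace ℝ (Fin d) → ℝ)
    (f : EuclideanSpace ℝ (Fin d) → ℝ)
    (hf : ∀ x, f x = (1 / (Fintype.card ι : ℝ)) * ∑ i, fS i x)
    (hdiff : ∀ i, Differentiable ℝ (fS i))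
    -- L-smoothness of f
    (L : ℝ) (hL : 0 ≤ L)
    (hsmooth : ∀ x y, ‖gradient f x - gradient f y‖ ≤ L * ‖x - y‖)
    -- global Hessian variance
    (Lpm : ℝ) (hLpm : 0 ≤ Lpm)
    (hGH : ∀ x y, (1 / (Fintype.card ι : ℝ)) *
          ∑ i, ‖gradient (fS i) x - gradient (fS i) y‖ ^ 2
        - ‖gradient f x - gradient f y‖ ^ 2
      ≤ Lpm ^ 2 * ‖x - y‖ ^ 2)
    -- probability of full-gradient synchronization and momentum
    (p a : ℝ) (hp0 : 0 < p) (hp1 : p ≤ 1) (ha0 : 0 < a) (ha1 : a ≤ 1)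
    -- past randomness
    {Ω₀ : Type*} [MeasurableSpace Ω₀] (μ₀ : Measure Ω₀) [IsProbabilityMeasure μ₀]
    -- coin randomness (the same coin for all workers)
    (μc : Measure Bool) [IsProbabilityMeasure μc]
    (hcoin : μc {true} = ENNReal.ofReal p)
    -- mini-batch estimator randomness (independent across workers)
    {Ωb : ι → Type*} [∀ i, MeasurableSpace (Ωb i)]
    (νb : ∀ i, Measure (Ωb i)) [∀ i, IsProbabilityMeasure (νb i)]
    -- compressor randomness (independent across workers)
    {Ωq : ι → Type*} [∀ i, MeasurableSpace (Ωq i)]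
    (νq : ∀ i, Measure (Ωq i)) [∀ i, IsProbabilityMeasure (νq i)]
    -- mini-batch estimators: conditionally unbiased, local Hessian variance with batch size b
    (Dhat : (i : ι) → EuclideanSpace ℝ (Fin d) → EuclideanSpace ℝ (Fin d) →
      Ωb i → EuclideanSpace ℝ (Fin d))
    (hDmeas : ∀ i, Measurable fun q :
        (EuclideanSpace ℝ (Fin d) × EuclideanSpace ℝ (Fin d)) × Ωb i =>
        Dhat i q.1.1 q.1.2 q.2)
    (hDint : ∀ i x y, Integrable (fun wb => Dhat i x y wb) (νb i))
    (hDint2 : ∀ i x y, Integrable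
      (fun wb => ‖Dhat i x y wb - (gradient (fS i) x - gradient (fS i) y)‖ ^ 2) (νb i))
    (hDunbiased : ∀ i x y,
      ∫ wb, Dhat i x y wb ∂(νb i) = gradient (fS i) x - gradient (fS i) y)
    (b Lloc : ℝ) (hb : 0 < b) (hLloc : 0 ≤ Lloc)
    (hlocal : ∀ x y, (1 / (Fintype.card ι : ℝ)) *
        ∑ i, ∫ wb, ‖Dhat i x y wb - (gradient (fS i) x - gradient (fS i) y)‖ ^ 2 ∂(νb i)
      ≤ (Lloc ^ 2 / b) * ‖x - y‖ ^ 2)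
    -- unbiased compressors with variance parameter ω
    (omg : ℝ) (homg : 0 ≤ omg)
    (Q : (i : ι) → EuclideanSpace ℝ (Fin d) → Ωq i → EuclideanSpace ℝ (Fin d))
    (hQmeas : ∀ i, Measurable fun q : EuclideanSpace ℝ (Fin d) × Ωq i => Q i q.1 q.2)
    (hQint : ∀ i z, Integrable (fun wq => Q i z wq) (νq i))
    (hQint2 : ∀ i z, Integrable (fun wq => ‖Q i z wq - z‖ ^ 2) (νq i))
    (hQunbiased : ∀ i z, ∫ wq, Q i z wq ∂(νq i) = z)
    (hQvar : ∀ i z, ∫ wq, ‖Q i z wq - z‖ ^ 2 ∂(νq i) ≤ omg * ‖z‖ ^ 2)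
    -- current iterates, estimators and shifts (measurable with respect to the past)
    (xt xt1 : Ω₀ → EuclideanSpace ℝ (Fin d))
    (gt ht : ι → Ω₀ → EuclideanSpace ℝ (Fin d))
    (hxtm : Measurable xt) (hxt1m : Measurable xt1)
    (hgtm : ∀ i, Measurable (gt i)) (hhtm : ∀ i, Measurable (ht i))
    -- the new shifts: with probability p set to the full gradient,
    -- otherwise add a stochastic gradient difference
    (ht1 : ι → Ω₀ × Bool × (∀ i, Ωb i) × (∀ i, Ωq i) → EuclideanSpace ℝ (Fin d))
    (hht1 : ∀ i w, ht1 i w =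
      if w.2.1 then gradient (fS i) (xt1 w.1)
      else ht i w.1 + Dhat i (xt1 w.1) (xt w.1) (w.2.2.1 i))
    -- the new estimators: momentum variance reduction with compression
    (gt1 : ι → Ω₀ × Bool × (∀ i, Ωb i) × (∀ i, Ωq i) → EuclideanSpace ℝ (Fin d))
    (hgt1 : ∀ i w, gt1 i w =
      gt i w.1 + Q i (ht1 i w - ht i w.1 - a • (gt i w.1 - ht i w.1)) (w.2.2.2 i))
    -- integrability of the relevant squared norms
    (hint1 : ∀ i, Integrable
      (fun w : Ω₀ × Bool × (∀ i, Ωb i) × (∀ i, Ωq i) => ‖gt1 i w - ht1 i w‖ ^ 2)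
      (μ₀.prod (μc.prod ((Measure.pi νb).prod (Measure.pi νq)))))
    (hint2 : ∀ i, Integrable (fun ω₀ => ‖gt i ω₀ - ht i ω₀‖ ^ 2) μ₀)
    (hint3 : Integrable (fun ω₀ => ‖xt1 ω₀ - xt ω₀‖ ^ 2) μ₀)
    (hint4 : ∀ i, Integrable
      (fun ω₀ => ‖ht i ω₀ - gradient (fS i) (xt ω₀)‖ ^ 2) μ₀) :
    (1 / (Fintype.card ι : ℝ)) *
        ∑ i, ∫ w, ‖gt1 i w - ht1 i w‖ ^ 2
          ∂(μ₀.prod (μc.prod ((Measure.pi νb).prod (Measure.pi νq))))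
      ≤ (2 * a ^ 2 * omg + (1 - a) ^ 2) *
          ((1 / (Fintype.card ι : ℝ)) *
            ∑ i, ∫ ω₀, ‖gt i ω₀ - ht i ω₀‖ ^ 2 ∂μ₀)
        + 4 * p * omg *
            ((1 / (Fintype.card ι : ℝ)) *
              ∑ i, ∫ ω₀, ‖ht i ω₀ - gradient (fS i) (xt ω₀)‖ ^ 2 ∂μ₀)
        + 2 * omg * ((1 - p) * Lloc ^ 2 / b + 2 * (Lpm ^ 2 + L ^ 2)) *
            ∫ ω₀, ‖xt1 ω₀ - xt ω₀‖ ^ 2 ∂μ₀ :=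
  local_compression_error_recursion_byz_dasha_page_general fS f L hsmooth Lpm hGH p a hp0 hp1 μ₀ μc
    hcoin νb νq Dhat hDint hDint2 hDunbiased b Lloc hlocal omg homg Q hQint hQint2 hQunbiased hQvar
    xt xt1 gt ht ht1 hht1 gt1 hgt1 hint2 hint3 hint4
end
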